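/- arXiv:2307.15389 — 7 statements merged into one kernel-verified Lean document; each statement's English description precedes it below -/
import Mathlib

section
/- Let Ω be a nonempty subset of ℝ^s, let C ⊆ ℝ^s be a nonempty closed convex set, let x̄ ∈ Ω ∩ C, and suppose Ω is locally closed around x̄. Then the proximal normal cone with respect to C satisfies N^p_C(x̄,Ω) = {x* ∈ ℝ^s : ∃ p > 0 such that x̄ + p x* ∈ C and ⟨x*, x − x̄⟩ ≤ (1/(2p))‖x − x̄‖² for all x ∈ Ω ∩ C}. -/
open Set Metric Filter Topology
open scoped RealInnerProductSpace

variable {E : Type*} [NormedAddCommGroup E] [InnerProductSpace ℝ E]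
variable {F' : Type*} [NormedAddCommGroup F'] [InnerProductSpace ℝ F']

/-- `Π(x,Ω)`: the set of closest points (Euclidean projectors) of `x` in `Ω`. -/
def projSet (x : E) (Ω : Set E) : Set E := {u | u ∈ Ω ∧ ‖u - x‖ = Metric.infDist x Ω}

/-- `Π⁻¹(u,Ω)`. -/
def projInv (u : E) (Ω : Set E) : Set E := {x | u ∈ projSet x Ω}

/-- The proximal normal cone to `Ω` at `x` with respect to `C`:
`N^p_C(x,Ω) = {v | ∃ t > 0, x + t v ∈ Π⁻¹(x, Ω ∩ C) ∩ C}`. -/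
def proxNC (C Ω : Set E) (x : E) : Set E :=
  {v | ∃ t > (0 : ℝ), x + t • v ∈ projInv x (Ω ∩ C) ∩ C}

/-- The limiting normal cone to `Ω` at `x` with respect to `C`
(sequential Painlevé–Kuratowski outer limit of `N^p_C(·,Ω)` over `Ω ∩ C ∋ x_k → x`). -/
def limNC (C Ω : Set E) (x : E) : Set E :=
  {v | ∃ (xs vs : ℕ → E),
    (∀ k, xs k ∈ Ω ∩ C) ∧ Filter.Tendsto xs Filter.atTop (nhds x) ∧
    (∀ k, vs k ∈ proxNC C Ω (xs k)) ∧ Filter.Tendsto vs Filter.atTop (nhds v)}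

/-! The proximal normal inequality `⟪v, x - x̄⟫ ≤ ‖x - x̄‖² / (2p)` is the expanded form of
`‖p v‖ ≤ ‖x - (x̄ + p v)‖`, i.e. of `x̄` being a closest point of `Ω ∩ C` to `x̄ + p v`. -/

theorem inner_le_one_div_two_mul_norm_sq_iff {v w : E} {t : ℝ} (ht : 0 < t) :
    ⟪v, w⟫ ≤ 1 / (2 * t) * ‖w‖ ^ 2 ↔ ‖t • v‖ ≤ ‖w - t • v‖ := by
  rw [← sq_le_sq₀ (norm_nonneg _) (norm_nonneg _), norm_sub_sq_real, real_inner_smul_right,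
    real_inner_comm, one_div_mul_eq_div, le_div_iff₀ (by positivity)]
  constructor <;> intro h <;> linarith

theorem mem_projInv_iff {G : Type*} [NormedAddCommGroup G] {S : Set G} {u x : G} (hu : u ∈ S) :
    x ∈ projInv u S ↔ ∀ y ∈ S, ‖u - x‖ ≤ ‖y - x‖ := by
  have hdist : ∀ y, dist x y = ‖y - x‖ := fun y => by rw [dist_comm, dist_eq_norm]
  have hle : infDist x S ≤ ‖u - x‖ := by rw [← hdist]; exact infDist_le_dist_of_mem hu
  change u ∈ S ∧ ‖u - x‖ = infDist x S ↔ _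
  rw [and_iff_right hu, ← hle.ge_iff_eq', le_infDist ⟨u, hu⟩]
  simp only [hdist]

theorem add_smul_mem_projInv_iff {S : Set E} {x v : E} {t : ℝ} (ht : 0 < t) (hx : x ∈ S) :
    x + t • v ∈ projInv x S ↔ ∀ y ∈ S, ⟪v, y - x⟫ ≤ 1 / (2 * t) * ‖y - x‖ ^ 2 := by
  rw [mem_projInv_iff hx]
  refine forall₂_congr fun y _ => ?_
  rw [inner_le_one_div_two_mul_norm_sq_iff ht, sub_add_cancel_left, norm_neg,
    sub_add_eq_sub_sub]

theorem stmt0_general {s : ℕ} (Ω C : Set (EuclideanSpace ℝ (Fin s)))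
    (xb : EuclideanSpace ℝ (Fin s)) (hxb : xb ∈ Ω ∩ C) :
    proxNC C Ω xb =
      {v | ∃ p > (0 : ℝ), xb + p • v ∈ C ∧
        ∀ x ∈ Ω ∩ C, ⟪v, x - xb⟫ ≤ 1 / (2 * p) * ‖x - xb‖ ^ 2} := by
  ext v
  refine exists_congr fun t => and_congr_right fun ht => ?_
  rw [mem_inter_iff, add_smul_mem_projInv_iff ht hxb, and_comm]

/-- Proposition 1(i): description of the proximal normal cone with respect to a set. -/
theorem stmt0 {s : ℕ} (Ω C : Set (EuclideanSpace ℝ (Fin s))) (hΩne : Ω.Nonempty)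
    (hCne : C.Nonempty) (hCcl : IsClosed C) (hCcv : Convex ℝ C)
    (xb : EuclideanSpace ℝ (Fin s)) (hxb : xb ∈ Ω ∩ C)
    (hloc : ∃ r > (0 : ℝ), IsClosed (Ω ∩ Metric.closedBall xb r)) :
    proxNC C Ω xb =
      {v | ∃ p > (0 : ℝ), xb + p • v ∈ C ∧
        ∀ x ∈ Ω ∩ C, ⟪v, x - xb⟫ ≤ 1 / (2 * p) * ‖x - xb‖ ^ 2} :=
  stmt0_general Ω C xb hxb
end

section
/- Let Ω be a nonempty subset of ℝ^s, let C ⊆ ℝ^s be a nonempty closed convex set, let x̄ ∈ Ω ∩ C, and suppose Ω is locally closed around x̄. Then N^p_C(x̄,Ω) = N^p(x̄, Ω ∩ C) ∩ {x* ∈ ℝ^s : ∃ p > 0 such that x̄ + p x* ∈ C}, where N^p(x̄, Ω ∩ C) is the (classical) proximal normal cone to Ω ∩ C at x̄. -/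
open Set Metric Filter Topology
open scoped RealInnerProductSpace

variable {E : Type*} [NormedAddCommGroup E] [InnerProductSpace ℝ E]
variable {F' : Type*} [NormedAddCommGroup F'] [InnerProductSpace ℝ F']

/-- The classical proximal normal cone `N^p(x,A) = cone[Π⁻¹(x,A) − x]`. -/
def proxNCcl (A : Set E) (x : E) : Set E :=
  {v | ∃ l : ℝ, 0 ≤ l ∧ ∃ u ∈ projInv x A, v = l • (u - x)}

/-!
A point `u` projecting onto `x̄ ∈ A` keeps projecting onto `x̄` as it slides along the segment
`[x̄, u]`, so every classical proximal normal `v` satisfies `x̄ + t v ∈ Π⁻¹(x̄, A)` for all small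
`t ≥ 0`. By convexity, `x̄ + p v ∈ C` likewise gives `x̄ + t v ∈ C` for all `t ∈ [0, p]`; a common
small `t > 0` then witnesses `v ∈ N^p_C(x̄, Ω)`.
-/

theorem add_smul_sub_mem_projInv {A : Set E} {x u : E} (hu : u ∈ projInv x A) {θ : ℝ}
    (hθ : θ ∈ Icc (0 : ℝ) 1) : x + θ • (u - x) ∈ projInv x A := by
  obtain ⟨hxA, hxu⟩ := hu
  set w := x + θ • (u - x)
  have hxw : ‖x - w‖ = θ * ‖u - x‖ := by
    rw [show x - w = (-θ) • (u - x) by simp only [w]; module, norm_smul, norm_neg,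
      Real.norm_of_nonneg hθ.1]
  have huw : ‖u - w‖ = (1 - θ) * ‖u - x‖ := by
    rw [show u - w = (1 - θ) • (u - x) by simp only [w]; module, norm_smul,
      Real.norm_of_nonneg (sub_nonneg.2 hθ.2)]
  refine ⟨hxA, le_antisymm ?_ ?_⟩
  · refine (le_infDist ⟨x, hxA⟩).2 fun y hy => ?_
    have hxy : ‖u - x‖ ≤ ‖u - y‖ := by
      rw [norm_sub_rev, hxu, ← dist_eq_norm]; exact infDist_le_dist_of_mem hy
    have htri : ‖u - y‖ ≤ ‖u - w‖ + dist w y := by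
      rw [dist_eq_norm, ← sub_add_sub_cancel u w y]; exact norm_add_le _ _
    linarith
  · simpa only [dist_eq_norm, norm_sub_rev] using infDist_le_dist_of_mem (x := w) hxA

theorem exists_pos_forall_add_smul_mem_projInv {A : Set E} {x v : E} (hv : v ∈ proxNCcl A x) :
    ∃ ε > (0 : ℝ), ∀ t ∈ Icc 0 ε, x + t • v ∈ projInv x A := by
  obtain ⟨l, hl, u, hu, rfl⟩ := hv
  -- `ε = (l + 1)⁻¹` avoids a case split on `l = 0`.
  refine ⟨(l + 1)⁻¹, by positivity, fun t ht => ?_⟩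
  have htl : t * l ∈ Icc (0 : ℝ) 1 := by
    refine ⟨mul_nonneg ht.1 hl, ?_⟩
    calc t * l ≤ (l + 1)⁻¹ * (l + 1) := by gcongr <;> linarith [ht.2]
      _ = 1 := inv_mul_cancel₀ (by linarith)
  rw [smul_smul]
  exact add_smul_sub_mem_projInv hu htl

theorem Convex.add_smul_mem_of_le {C : Set E} (hC : Convex ℝ C) {x v : E} (hx : x ∈ C)
    {p : ℝ} (hp : 0 < p) (hpv : x + p • v ∈ C) {t : ℝ} (ht : t ∈ Icc 0 p) :
    x + t • v ∈ C := by
  have htp : t / p ∈ Icc (0 : ℝ) 1 :=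
    ⟨div_nonneg ht.1 hp.le, (div_le_one hp).2 ht.2⟩
  simpa only [smul_smul, div_mul_cancel₀ t hp.ne'] using hC.add_smul_mem hx hpv htp

theorem proxNC_subset (C Ω : Set E) (x : E) :
    proxNC C Ω x ⊆ proxNCcl (Ω ∩ C) x ∩ {v | ∃ p > (0 : ℝ), x + p • v ∈ C} := by
  rintro v ⟨t, ht, hproj, hC⟩
  refine ⟨⟨t⁻¹, (inv_pos.2 ht).le, x + t • v, hproj, ?_⟩, t, ht, hC⟩
  rw [add_sub_cancel_left, smul_smul, inv_mul_cancel₀ ht.ne', one_smul]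

theorem subset_proxNC {C Ω : Set E} (hC : Convex ℝ C) {x : E} (hx : x ∈ C) :
    proxNCcl (Ω ∩ C) x ∩ {v | ∃ p > (0 : ℝ), x + p • v ∈ C} ⊆ proxNC C Ω x := by
  rintro v ⟨hv, p, hp, hpv⟩
  obtain ⟨ε, hε, hproj⟩ := exists_pos_forall_add_smul_mem_projInv hv
  have ht : min ε p ∈ Icc 0 ε ∩ Icc 0 p :=
    ⟨⟨(lt_min hε hp).le, min_le_left _ _⟩, ⟨(lt_min hε hp).le, min_le_right _ _⟩⟩
  exact ⟨min ε p, lt_min hε hp, hproj _ ht.1, hC.add_smul_mem_of_le hx hp hpv ht.2⟩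

theorem stmt1_general {s : ℕ} (Ω C : Set (EuclideanSpace ℝ (Fin s))) (hCcv : Convex ℝ C)
    (xb : EuclideanSpace ℝ (Fin s)) (hxb : xb ∈ Ω ∩ C) :
    proxNC C Ω xb =
      proxNCcl (Ω ∩ C) xb ∩ {v | ∃ p > (0 : ℝ), xb + p • v ∈ C} :=
  (proxNC_subset C Ω xb).antisymm (subset_proxNC hCcv hxb.2)

/-- Proposition 1(ii), first formula. -/
theorem stmt1 {s : ℕ} (Ω C : Set (EuclideanSpace ℝ (Fin s))) (hΩne : Ω.Nonempty)
    (hCne : C.Nonempty) (hCcl : IsClosed C) (hCcv : Convex ℝ C)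
    (xb : EuclideanSpace ℝ (Fin s)) (hxb : xb ∈ Ω ∩ C)
    (hloc : ∃ r > (0 : ℝ), IsClosed (Ω ∩ Metric.closedBall xb r)) :
    proxNC C Ω xb =
      proxNCcl (Ω ∩ C) xb ∩ {v | ∃ p > (0 : ℝ), xb + p • v ∈ C} :=
  stmt1_general Ω C hCcv xb hxb
end

section
/- Let Ω be a nonempty subset of ℝ^s, let C ⊆ ℝ^s be a nonempty closed convex set, let x̄ ∈ Ω ∩ C, and suppose Ω is locally closed around x̄. Then N_C(x̄,Ω) = Limsup_{x → x̄, x ∈ C} (cone[x − Π(x, Ω ∩ C)]); that is, x* ∈ N_C(x̄,Ω) if and only if there exist sequences x_k → x̄ with x_k ∈ C and x_k* → x* such that for each k, x_k* = α_k (x_k − u_k) for some α_k ≥ 0 and u_k ∈ Π(x_k, Ω ∩ C). -/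
/-! A proximal normal `v` at `x` comes with a point `y = x + t v ∈ C` having `x` as a nearest
point in `Ω ∩ C`, so `v ∈ cone[y − Π(y, Ω ∩ C)]`. Nearest points persist along the segment from
`x` to `y`, and so, by convexity, does membership in `C`; hence `t` may be shrunk and `y` taken
as close to `x` as we like. Passing to sequences identifies the two outer limits: in one
direction `y_k → x̄` because `x_k → x̄`, in the other the nearest points `u_k ∈ Π(x_k, Ω ∩ C)`
converge to `x̄` since `‖u_k − x_k‖ ≤ ‖x̄ − x_k‖`. -/

open Set Metric Filter Topology
open scoped RealInnerProductSpace

variable {E : Type*} [NormedAddCommGroup E] [InnerProductSpace ℝ E]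
variable {F' : Type*} [NormedAddCommGroup F'] [InnerProductSpace ℝ F']

/-- The outer limit `Limsup_{x → x̄, x ∈ C} cone[x − Π(x, Ω ∩ C)]`. -/
def limsupConeProj (C Ω : Set E) (xb : E) : Set E :=
  {v | ∃ (xs vs : ℕ → E) (a : ℕ → ℝ) (u : ℕ → E),
    (∀ k, xs k ∈ C) ∧ Tendsto xs atTop (𝓝 xb) ∧ Tendsto vs atTop (𝓝 v) ∧
    ∀ k, 0 ≤ a k ∧ u k ∈ projSet (xs k) (Ω ∩ C) ∧ vs k = a k • (xs k - u k)}

section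

variable {V : Type*} [NormedAddCommGroup V] {S : Set V} {x y u : V}

lemma dist_le_of_mem_projSet (hu : u ∈ projSet x S) {z : V} (hz : z ∈ S) :
    dist u x ≤ dist x z := by
  rw [dist_eq_norm, hu.2]
  exact infDist_le_dist_of_mem hz

lemma tendsto_of_mem_projSet {ι : Type*} {l : Filter ι} {xs u : ι → V} {xb : V} (hxb : xb ∈ S)
    (hxs : Tendsto xs l (𝓝 xb)) (hu : ∀ k, u k ∈ projSet (xs k) S) : Tendsto u l (𝓝 xb) := by
  rw [tendsto_iff_dist_tendsto_zero] at hxs ⊢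
  refine squeeze_zero (fun _ => dist_nonneg) (fun k => ?_) (by simpa using hxs.const_mul 2)
  calc dist (u k) xb ≤ dist (u k) (xs k) + dist (xs k) xb := dist_triangle _ _ _
    _ ≤ 2 * dist (xs k) xb := by linarith [dist_le_of_mem_projSet (hu k) hxb]

section

variable [NormedSpace ℝ V] {C Ω : Set V}

lemma mem_projSet_add_smul_sub (hu : u ∈ projSet y S) {l : ℝ} (hl : l ∈ Icc (0 : ℝ) 1) :
    u ∈ projSet (u + l • (y - u)) S := by
  set z := u + l • (y - u)
  have hdist_uz : ‖u - z‖ = l * ‖y - u‖ := by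
    rw [show u - z = -(l • (y - u)) by simp [z], norm_neg, norm_smul, Real.norm_of_nonneg hl.1]
  have hdist_yz : dist y z = (1 - l) * ‖y - u‖ := by
    rw [dist_eq_norm, show y - z = (1 - l) • (y - u) by simp only [z, sub_smul, one_smul]; abel,
      norm_smul, Real.norm_of_nonneg (sub_nonneg.2 hl.2)]
  refine ⟨hu.1, le_antisymm ?_
    ((infDist_le_dist_of_mem hu.1).trans_eq (by rw [dist_eq_norm, norm_sub_rev]))⟩
  have hy : ‖y - u‖ ≤ infDist z S + dist y z := by
    rw [norm_sub_rev, hu.2]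
    exact infDist_le_infDist_add_dist
  rw [hdist_uz]
  linarith

lemma add_smul_sub_mem_projInv_inter (hC : Convex ℝ C) (hy : y ∈ projInv x (Ω ∩ C) ∩ C)
    {l : ℝ} (hl : l ∈ Icc (0 : ℝ) 1) : x + l • (y - x) ∈ projInv x (Ω ∩ C) ∩ C :=
  ⟨mem_projSet_add_smul_sub hy.1 hl, hC.add_smul_sub_mem hy.1.1.2 hy.2 hl⟩

end

end

section

variable {C Ω : Set E} {x u : E}

lemma smul_sub_mem_proxNC (hC : Convex ℝ C) (hx : x ∈ C) (hu : u ∈ projSet x (Ω ∩ C))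
    {a : ℝ} (ha : 0 ≤ a) : a • (x - u) ∈ proxNC C Ω u := by
  have hl : a / (a + 1) ∈ Icc (0 : ℝ) 1 :=
    ⟨by positivity, (div_le_one (by linarith)).2 (by linarith)⟩
  refine ⟨(a + 1)⁻¹, by positivity, ?_⟩
  rw [smul_smul, ← div_eq_inv_mul]
  exact add_smul_sub_mem_projInv_inter hC ⟨hu, hx⟩ hl

lemma exists_near_of_mem_proxNC (hC : Convex ℝ C) {v : E} (hv : v ∈ proxNC C Ω x) {ε : ℝ}
    (hε : 0 < ε) :
    ∃ y ∈ C, dist y x < ε ∧ x ∈ projSet y (Ω ∩ C) ∧ ∃ a : ℝ, 0 ≤ a ∧ v = a • (y - x) := by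
  obtain ⟨t₀, ht₀, hy₀⟩ := hv
  set t := min t₀ (ε / (‖v‖ + 1))
  have ht : 0 < t := lt_min ht₀ (by positivity)
  have hl : t / t₀ ∈ Icc (0 : ℝ) 1 := ⟨by positivity, (div_le_one ht₀).2 (min_le_left _ _)⟩
  have hy : x + t • v ∈ projInv x (Ω ∩ C) ∩ C := by
    simpa [smul_smul, div_mul_cancel₀ t ht₀.ne'] using add_smul_sub_mem_projInv_inter hC hy₀ hl
  refine ⟨x + t • v, hy.2, ?_, hy.1, t⁻¹, by positivity, ?_⟩
  · calc dist (x + t • v) x = t * ‖v‖ := by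
          rw [dist_eq_norm, add_sub_cancel_left, norm_smul, Real.norm_of_nonneg ht.le]
      _ ≤ ε / (‖v‖ + 1) * ‖v‖ := by gcongr; exact min_le_right _ _
      _ < ε := by
          rw [div_mul_eq_mul_div, div_lt_iff₀ (by positivity)]
          nlinarith
  · rw [add_sub_cancel_left, smul_smul, inv_mul_cancel₀ ht.ne', one_smul]

lemma limNC_subset_limsupConeProj (hC : Convex ℝ C) (xb : E) :
    limNC C Ω xb ⊆ limsupConeProj C Ω xb := by
  rintro v ⟨xs, vs, -, hxs, hprox, hvs⟩
  choose ys hyC hyx hproj a ha hva using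
    fun k => exists_near_of_mem_proxNC hC (hprox k) (Nat.one_div_pos_of_nat (n := k))
  have hys : Tendsto ys atTop (𝓝 xb) := by
    refine hxs.congr_dist (squeeze_zero (fun _ => dist_nonneg) (fun k => ?_)
      tendsto_one_div_add_atTop_nhds_zero_nat)
    rw [dist_comm]
    exact (hyx k).le
  exact ⟨ys, vs, a, xs, hyC, hys, hvs, fun k => ⟨ha k, hproj k, hva k⟩⟩

lemma limsupConeProj_subset_limNC (hC : Convex ℝ C) {xb : E} (hxb : xb ∈ Ω ∩ C) :
    limsupConeProj C Ω xb ⊆ limNC C Ω xb := by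
  rintro v ⟨xs, vs, a, u, hxsC, hxs, hvs, h⟩
  refine ⟨u, vs, fun k => (h k).2.1.1, tendsto_of_mem_projSet hxb hxs fun k => (h k).2.1,
    fun k => ?_, hvs⟩
  rw [(h k).2.2]
  exact smul_sub_mem_proxNC hC (hxsC k) (h k).2.1 (h k).1

end

theorem stmt5_general {s : ℕ} (Ω C : Set (EuclideanSpace ℝ (Fin s)))
    (hCcv : Convex ℝ C)
    (xb : EuclideanSpace ℝ (Fin s)) (hxb : xb ∈ Ω ∩ C) :
    limNC C Ω xb =
      {v | ∃ (xs vs : ℕ → EuclideanSpace ℝ (Fin s)) (a : ℕ → ℝ) (u : ℕ → EuclideanSpace ℝ (Fin s)),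
        (∀ k, xs k ∈ C) ∧ Filter.Tendsto xs Filter.atTop (nhds xb) ∧
        Filter.Tendsto vs Filter.atTop (nhds v) ∧
        ∀ k, 0 ≤ a k ∧ u k ∈ projSet (xs k) (Ω ∩ C) ∧ vs k = a k • (xs k - u k)} :=
  (limNC_subset_limsupConeProj hCcv xb).antisymm (limsupConeProj_subset_limNC hCcv hxb)

/-- Proposition 1(v): `N_C(xb,Ω) = Limsup_{x → xb, x ∈ C} cone[x − Π(x, Ω ∩ C)]`. -/
theorem stmt5 {s : ℕ} (Ω C : Set (EuclideanSpace ℝ (Fin s))) (hΩne : Ω.Nonempty)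
    (hCne : C.Nonempty) (hCcl : IsClosed C) (hCcv : Convex ℝ C)
    (xb : EuclideanSpace ℝ (Fin s)) (hxb : xb ∈ Ω ∩ C)
    (hloc : ∃ r > (0 : ℝ), IsClosed (Ω ∩ Metric.closedBall xb r)) :
    limNC C Ω xb =
      {v | ∃ (xs vs : ℕ → EuclideanSpace ℝ (Fin s)) (a : ℕ → ℝ) (u : ℕ → EuclideanSpace ℝ (Fin s)),
        (∀ k, xs k ∈ C) ∧ Filter.Tendsto xs Filter.atTop (nhds xb) ∧
        Filter.Tendsto vs Filter.atTop (nhds v) ∧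
        ∀ k, 0 ≤ a k ∧ u k ∈ projSet (xs k) (Ω ∩ C) ∧ vs k = a k • (xs k - u k)} :=
  stmt5_general Ω C hCcv xb hxb
end

section
/- Let F : ℝ^n ⇒ ℝ^m be a set-valued mapping whose domain dom F := {x : F(x) ≠ ∅} is a nonempty closed convex set, and whose graph is locally closed around (x̄,ȳ) ∈ gph F. Then for every y* ∈ ℝ^m, the relative limiting coderivative satisfies D̄*F(x̄,ȳ)(y*) ⊆ D*F(x̄,ȳ)(y*), where D̄*F := D*_{dom F} F is the limiting coderivative with respect to dom F and D*F is the (classical Mordukhovich) limiting coderivative. -/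
open Set Metric Filter Topology
open scoped RealInnerProductSpace

variable {E : Type*} [NormedAddCommGroup E] [InnerProductSpace ℝ E]
variable {F' : Type*} [NormedAddCommGroup F'] [InnerProductSpace ℝ F']

/-- A pair `(x,y)` as an element of the `L²` (Euclidean) product. -/
noncomputable def toL2 (x : E) (y : F') : WithLp 2 (E × F') :=
  (WithLp.equiv 2 (E × F')).symm (x, y)

/-- The graph of a set-valued map, inside the `L²` product. -/
def gphL2 (F : E → Set F') : Set (WithLp 2 (E × F')) :=
  {p | ((WithLp.equiv 2 (E × F')) p).2 ∈ F ((WithLp.equiv 2 (E × F')) p).1}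

/-- The cylinder `C × ℝ^m` inside the `L²` product. -/
def cylL2 (C : Set E) : Set (WithLp 2 (E × F')) :=
  {p | ((WithLp.equiv 2 (E × F')) p).1 ∈ C}

/-- The limiting coderivative of `F` at `(xb,yb)` with respect to `C`:
`D*_C F(xb,yb)(y*) = {x* | (x*,-y*) ∈ N_{C×ℝ^m}((xb,yb), gph F_C)}`. -/
noncomputable def coderivWRT (C : Set E) (F : E → Set F') (xb : E) (yb : F')
    (ystar : F') : Set E :=
  {xstar | toL2 xstar (-ystar) ∈ limNC (cylL2 C) (gphL2 F ∩ cylL2 C) (toL2 xb yb)}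

/-- The classical (Mordukhovich) limiting normal cone
`N(z,Ω) = Limsup_{z' → z} cone[z' − Π(z',Ω)]`. -/
def limNCcl (Ω : Set E) (z : E) : Set E :=
  {v | ∃ (zs vs : ℕ → E) (a : ℕ → ℝ) (u : ℕ → E),
    Filter.Tendsto zs Filter.atTop (nhds z) ∧ Filter.Tendsto vs Filter.atTop (nhds v) ∧
    ∀ k, 0 ≤ a k ∧ u k ∈ projSet (zs k) Ω ∧ vs k = a k • (zs k - u k)}

/-- The classical limiting coderivative. -/
noncomputable def coderivCl (F : E → Set F') (xb : E) (yb : F') (ystar : F') : Set E :=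
  {xstar | toL2 xstar (-ystar) ∈ limNCcl (gphL2 F) (toL2 xb yb)}

theorem mem_projSet_add_smul_sub_s7 {E : Type*} [NormedAddCommGroup E] [NormedSpace ℝ E]
    {Ω : Set E} {u p : E} (hu : u ∈ projSet p Ω) {l : ℝ} (hl0 : 0 ≤ l) (hl1 : l ≤ 1) :
    u ∈ projSet (u + l • (p - u)) Ω := by
  obtain ⟨huΩ, hdist⟩ := hu
  set q := u + l • (p - u)
  have huq : ‖u - q‖ = l * ‖p - u‖ := by
    rw [show u - q = -(l • (p - u)) by simp only [q]; abel, norm_neg, norm_smul,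
      Real.norm_eq_abs, abs_of_nonneg hl0]
  have hpq : ‖p - q‖ = (1 - l) * ‖p - u‖ := by
    rw [show p - q = (1 - l) • (p - u) by simp only [q, sub_smul, one_smul]; abel, norm_smul,
      Real.norm_eq_abs, abs_of_nonneg (by linarith)]
  refine ⟨huΩ, le_antisymm ?_ ?_⟩
  · -- a point `w ∈ Ω` closer to `q` than `u` would be closer to `p` than `u`
    by_contra! hlt
    obtain ⟨w, hw, hwq⟩ := (Metric.infDist_lt_iff ⟨u, huΩ⟩).mp hlt
    have hpw : ‖p - u‖ ≤ dist p w := by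
      rw [norm_sub_rev, hdist]; exact Metric.infDist_le_dist_of_mem hw
    have := dist_triangle p q w
    rw [dist_eq_norm p q, hpq] at this
    rw [huq] at hwq
    linarith
  · simpa only [dist_eq_norm, norm_sub_rev] using Metric.infDist_le_dist_of_mem (x := q) huΩ

theorem exists_pos_le_tendsto_smul_zero {E : Type*} [NormedAddCommGroup E] [NormedSpace ℝ E]
    {t : ℕ → ℝ} (ht : ∀ k, 0 < t k) (v : ℕ → E) :
    ∃ s : ℕ → ℝ, (∀ k, 0 < s k ∧ s k ≤ t k) ∧ Tendsto (fun k => s k • v k) atTop (𝓝 0) := by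
  refine ⟨fun k => min (t k) (1 / ((k + 1) * (‖v k‖ + 1))),
    fun k => ⟨lt_min (ht k) (by positivity), min_le_left _ _⟩, ?_⟩
  refine squeeze_zero_norm (fun k => ?_) tendsto_one_div_add_atTop_nhds_zero_nat
  have hmin := min_le_right (t k) (1 / ((k + 1) * (‖v k‖ + 1)))
  have hpos : 0 < min (t k) (1 / ((k + 1) * (‖v k‖ + 1))) := lt_min (ht k) (by positivity)
  calc ‖min (t k) (1 / ((k + 1) * (‖v k‖ + 1))) • v k‖
      = min (t k) (1 / ((k + 1) * (‖v k‖ + 1))) * ‖v k‖ := by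
        rw [norm_smul, Real.norm_of_nonneg hpos.le]
    _ ≤ 1 / ((k + 1) * (‖v k‖ + 1)) * (‖v k‖ + 1) := by
        gcongr
        linarith
    _ = 1 / (k + 1) := by field_simp

/- A relative proximal normal `v` at `y` is a classical one for `Ω ∩ C`, as `y` is a closest point
of `y + t v`. Shrinking `t` keeps this true (segment property) and lets `y_k + t_k v_k → x`. -/
theorem limNC_subset_limNCcl (C Ω : Set E) (x : E) : limNC C Ω x ⊆ limNCcl (Ω ∩ C) x := by
  rintro v ⟨xs, vs, -, hxs, hprox, hvs⟩
  choose t ht hproj using hprox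
  obtain ⟨s, hs, hsv⟩ := exists_pos_le_tendsto_smul_zero ht vs
  refine ⟨fun k => xs k + s k • vs k, vs, fun k => (s k)⁻¹, xs, ?_, hvs, fun k => ?_⟩
  · simpa using hxs.add hsv
  obtain ⟨hs0, hst⟩ := hs k
  have hseg := mem_projSet_add_smul_sub_s7 (hproj k).1 (div_nonneg hs0.le (ht k).le)
    ((div_le_one (ht k)).mpr hst)
  rw [add_sub_cancel_left, smul_smul, div_mul_cancel₀ _ (ht k).ne'] at hseg
  refine ⟨inv_nonneg.mpr hs0.le, hseg, ?_⟩
  rw [add_sub_cancel_left, smul_smul, inv_mul_cancel₀ hs0.ne', one_smul]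

theorem gphL2_inter_cylL2_dom {X Y : Type*} (F : X → Set Y) :
    gphL2 F ∩ cylL2 {x | (F x).Nonempty} = gphL2 F :=
  inter_eq_left.mpr fun _ hp => ⟨_, hp⟩

theorem stmt7_general {n m : ℕ} (F : EuclideanSpace ℝ (Fin n) → Set (EuclideanSpace ℝ (Fin m)))
    (xb : EuclideanSpace ℝ (Fin n)) (yb : EuclideanSpace ℝ (Fin m)) :
    ∀ ystar : EuclideanSpace ℝ (Fin m),
      coderivWRT {x : EuclideanSpace ℝ (Fin n) | (F x).Nonempty} F xb yb ystar ⊆ coderivCl F xb yb ystar := by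
  intro ystar xstar hx
  have h := limNC_subset_limNCcl _ _ _ hx
  rwa [inter_assoc, inter_self, gphL2_inter_cylL2_dom] at h

/-- Proposition 2(ii): the relative limiting coderivative is contained in the
classical limiting coderivative. -/
theorem stmt7 {n m : ℕ} (F : EuclideanSpace ℝ (Fin n) → Set (EuclideanSpace ℝ (Fin m)))
    (hdomne : {x : EuclideanSpace ℝ (Fin n) | (F x).Nonempty}.Nonempty)
    (hdomcl : IsClosed {x : EuclideanSpace ℝ (Fin n) | (F x).Nonempty})
    (hdomcv : Convex ℝ {x : EuclideanSpace ℝ (Fin n) | (F x).Nonempty})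
    (xb : EuclideanSpace ℝ (Fin n)) (yb : EuclideanSpace ℝ (Fin m)) (hgph : yb ∈ F xb)
    (hloc : ∃ r > (0 : ℝ), IsClosed (gphL2 F ∩ Metric.closedBall (toL2 xb yb) r)) :
    ∀ ystar : EuclideanSpace ℝ (Fin m),
      coderivWRT {x : EuclideanSpace ℝ (Fin n) | (F x).Nonempty} F xb yb ystar ⊆ coderivCl F xb yb ystar :=
  stmt7_general F xb yb
end

section
/- Let C ⊆ ℝ^n be a nonempty closed convex set, F : ℝ^n ⇒ ℝ^m a set-valued mapping, x̄ ∈ C, ȳ ∈ F(x̄), and suppose gph F is locally closed around (x̄,ȳ). If F has the Aubin property with respect to C around (x̄,ȳ) with constant κ ≥ 0, i.e. there exist neighborhoods U of x̄ and V of ȳ such that F(u) ∩ V ⊆ F(x) + κ‖u − x‖𝔹 for all x,u ∈ C ∩ U, then ‖x*‖ ≤ κ‖y*‖ for every y* ∈ ℝ^m and every x* ∈ D*_C F(x̄,ȳ)(y*). -/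
open Set Metric Filter Topology
open scoped RealInnerProductSpace

variable {E : Type*} [NormedAddCommGroup E] [InnerProductSpace ℝ E]
variable {F' : Type*} [NormedAddCommGroup F'] [InnerProductSpace ℝ F']

/-- `F` has the Aubin property with respect to `C` around `(xb,yb)` with constant `k`:
there are neighborhoods `U` of `xb` and `V` of `yb` with
`F(u) ∩ V ⊆ F(x) + k‖u−x‖·𝔹` for all `x,u ∈ C ∩ U`. -/
def AubinWRT (C : Set E) (F : E → Set F') (xb : E) (yb : F') (k : ℝ) : Prop :=
  ∃ U ∈ nhds xb, ∃ V ∈ nhds yb, ∀ x ∈ C ∩ U, ∀ u ∈ C ∩ U, ∀ y ∈ F u ∩ V,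
    ∃ y' ∈ F x, ‖y - y'‖ ≤ k * ‖u - x‖

/-
If `v` is a proximal normal to `gph F_C` at `z` with respect to `C × ℝ^m`, then `z` is a nearest
point of `gph F_C` to `z + t v` for some `t > 0`, and `z.1 + t v.1 ∈ C`. By convexity
`u = z.1 + s v.1 ∈ C` for `0 < s ≤ t`, and the Aubin property supplies `y' ∈ F u` with
`‖z.2 - y'‖ ≤ κ s ‖v.1‖`. Comparing the distances from `z + t v` to `z` and to `(u, y')` and
letting `s → 0` gives `‖v.1‖² ≤ κ ‖v.1‖ ‖v.2‖`, hence `‖v.1‖ ≤ κ ‖v.2‖` for all proximal normals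
at graph points near `(x̄, ȳ)`. This inequality is closed, so it passes to the limiting normals
`(x*, -y*)`.
-/

section

variable {X Y : Type*}

@[simp]
lemma toL2_fst (x : X) (y : Y) : (toL2 x y).fst = x := rfl

@[simp]
lemma toL2_snd (x : X) (y : Y) : (toL2 x y).snd = y := rfl

variable [NormedAddCommGroup X] [NormedAddCommGroup Y]

lemma AubinWRT.eventually_lipschitz_at_graph {C : Set X} {F : X → Set Y} {xb : X} {yb : Y}
    {κ : ℝ} (h : AubinWRT C F xb yb κ) :
    ∀ᶠ z in 𝓝 (toL2 xb yb), z ∈ gphL2 F ∩ cylL2 C →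
      ∀ᶠ u in 𝓝 z.fst, u ∈ C → ∃ y' ∈ F u, ‖z.snd - y'‖ ≤ κ * ‖z.fst - u‖ := by
  obtain ⟨U, hU, V, hV, hAub⟩ := h
  have hfst : Tendsto WithLp.fst (𝓝 (toL2 xb yb)) (𝓝 xb) :=
    (WithLp.continuous_fst ..).tendsto _
  have hsnd : Tendsto WithLp.snd (𝓝 (toL2 xb yb)) (𝓝 yb) :=
    (WithLp.continuous_snd ..).tendsto _
  filter_upwards [hfst.eventually (eventually_eventually_nhds.2 hU), hsnd.eventually hV]
    with z hzU hzV ⟨hzF, hzC⟩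
  filter_upwards [hzU] with u hu huC
  exact hAub u ⟨huC, hu⟩ z.fst ⟨hzC, hzU.self_of_nhds⟩ z.snd ⟨hzF, hzV⟩

variable [NormedSpace ℝ X] [NormedSpace ℝ Y]

/-- After squaring, the `t² ‖v‖²` terms cancel and a factor `s` comes out. -/
lemma two_mul_norm_fst_sq_le_of_le_norm_sub {κ t s : ℝ} {z v : WithLp 2 (X × Y)} {y' : Y}
    (ht : 0 ≤ t) (hs : 0 < s)
    (hmin : t * ‖v‖ ≤ ‖toL2 (z.fst + s • v.fst) y' - (z + t • v)‖)
    (hy' : ‖z.snd - y'‖ ≤ κ * ‖z.fst - (z.fst + s • v.fst)‖) :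
    2 * t * ‖v.fst‖ ^ 2 ≤ s * ((1 + κ ^ 2) * ‖v.fst‖ ^ 2) + 2 * κ * t * ‖v.fst‖ * ‖v.snd‖ := by
  set a := ‖v.fst‖
  set b := ‖v.snd‖
  have hfst : (toL2 (z.fst + s • v.fst) y' - (z + t • v)).fst = (s - t) • v.fst := by
    change z.fst + s • v.fst - (z.fst + t • v.fst) = _
    rw [sub_smul]
    abel
  have hsnd : (toL2 (z.fst + s • v.fst) y' - (z + t • v)).snd = (y' - z.snd) - t • v.snd := by
    change y' - (z.snd + t • v.snd) = _
    abel
  have hc : ‖(y' - z.snd) - t • v.snd‖ ≤ κ * (s * a) + t * b := by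
    calc ‖(y' - z.snd) - t • v.snd‖ ≤ ‖y' - z.snd‖ + ‖t • v.snd‖ := norm_sub_le _ _
      _ = ‖z.snd - y'‖ + t * b := by rw [norm_sub_rev, norm_smul, Real.norm_of_nonneg ht]
      _ ≤ κ * (s * a) + t * b := by
          rw [sub_add_cancel_left, norm_neg, norm_smul, Real.norm_of_nonneg hs.le] at hy'
          linarith
  have hsq : t ^ 2 * (a ^ 2 + b ^ 2) ≤ (s - t) ^ 2 * a ^ 2 + ‖(y' - z.snd) - t • v.snd‖ ^ 2 := by
    have := pow_le_pow_left₀ (by positivity) hmin 2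
    rwa [mul_pow, WithLp.prod_norm_sq_eq_of_L2, WithLp.prod_norm_sq_eq_of_L2, hfst, hsnd,
      norm_smul, Real.norm_eq_abs, mul_pow, sq_abs] at this
  have hc2 := pow_le_pow_left₀ (norm_nonneg _) hc 2
  have : s * (2 * t * a ^ 2) ≤ s * (s * ((1 + κ ^ 2) * a ^ 2) + 2 * κ * t * a * b) := by
    nlinarith
  exact le_of_mul_le_mul_left this hs

end

lemma exists_pos_of_mem_proxNC {C Ω : Set E} {z v : E} (hv : v ∈ proxNC C Ω z) :
    z ∈ Ω ∩ C ∧ ∃ t > (0 : ℝ), z + t • v ∈ C ∧ ∀ q ∈ Ω ∩ C, t * ‖v‖ ≤ ‖q - (z + t • v)‖ := by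
  obtain ⟨t, ht, ⟨hzΩ, hdist⟩, hpC⟩ := hv
  refine ⟨hzΩ, t, ht, hpC, fun q hq => ?_⟩
  calc t * ‖v‖ = ‖z - (z + t • v)‖ := by
        rw [sub_add_cancel_left, norm_neg, norm_smul, Real.norm_of_nonneg ht.le]
    _ = infDist (z + t • v) (Ω ∩ C) := hdist
    _ ≤ ‖q - (z + t • v)‖ := by
        rw [← dist_eq_norm, dist_comm]
        exact infDist_le_dist_of_mem hq

lemma limNC_subset {C Ω K : Set E} {x : E} (hK : IsClosed K)
    (h : ∀ᶠ y in 𝓝 x, y ∈ Ω ∩ C → proxNC C Ω y ⊆ K) : limNC C Ω x ⊆ K := by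
  rintro v ⟨xs, vs, hxs_mem, hxs, hvs_mem, hvs⟩
  refine hK.mem_of_tendsto hvs ?_
  filter_upwards [hxs.eventually h] with k hk
  exact hk (hxs_mem k) (hvs_mem k)

lemma norm_fst_le_of_mem_proxNC {C : Set E} (hC : Convex ℝ C) {F : E → Set F'} {κ : ℝ}
    (hκ : 0 ≤ κ) {z v : WithLp 2 (E × F')}
    (hF : ∀ᶠ u in 𝓝 z.fst, u ∈ C → ∃ y' ∈ F u, ‖z.snd - y'‖ ≤ κ * ‖z.fst - u‖)
    (hv : v ∈ proxNC (cylL2 C) (gphL2 F ∩ cylL2 C) z) : ‖v.fst‖ ≤ κ * ‖v.snd‖ := by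
  obtain ⟨⟨-, hzC⟩, t, ht, hpC, hmin⟩ := exists_pos_of_mem_proxNC hv
  set a := ‖v.fst‖
  set b := ‖v.snd‖
  have hest : ∀ᶠ s in 𝓝[>] (0 : ℝ),
      2 * t * a ^ 2 ≤ s * ((1 + κ ^ 2) * a ^ 2) + 2 * κ * t * a * b := by
    have hline : Tendsto (fun s : ℝ => z.fst + s • v.fst) (𝓝[>] 0) (𝓝 z.fst) := by
      have : Continuous (fun s : ℝ => z.fst + s • v.fst) := by fun_prop
      simpa using (this.tendsto 0).mono_left nhdsWithin_le_nhds
    filter_upwards [hline.eventually hF, Ioc_mem_nhdsGT ht] with s hFs ⟨hs0, hst⟩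
    have huC : z.fst + s • v.fst ∈ C := by
      have := hC.add_smul_mem (y := t • v.fst) hzC hpC
        ⟨by positivity, div_le_one_of_le₀ hst ht.le⟩
      rwa [smul_smul, div_mul_cancel₀ _ ht.ne'] at this
    obtain ⟨y', hy'F, hy'⟩ := hFs huC
    exact two_mul_norm_fst_sq_le_of_le_norm_sub ht.le hs0
      (hmin (toL2 _ y') ⟨⟨hy'F, huC⟩, huC⟩) hy'
  have hlim : Tendsto (fun s : ℝ => s * ((1 + κ ^ 2) * a ^ 2) + 2 * κ * t * a * b) (𝓝[>] 0)
      (𝓝 (2 * κ * t * a * b)) := by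
    have : Continuous (fun s : ℝ => s * ((1 + κ ^ 2) * a ^ 2) + 2 * κ * t * a * b) := by fun_prop
    simpa using (this.tendsto 0).mono_left nhdsWithin_le_nhds
  have hab : 2 * t * a ^ 2 ≤ 2 * κ * t * a * b := ge_of_tendsto hlim hest
  by_contra! hlt
  have ha : 0 < a := (mul_nonneg hκ (norm_nonneg _)).trans_lt hlt
  have := mul_lt_mul_of_pos_left hlt (by positivity : 0 < 2 * t * a)
  linarith

theorem stmt8_general {n m : ℕ} (C : Set (EuclideanSpace ℝ (Fin n)))
    (hCcv : Convex ℝ C)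
    (F : EuclideanSpace ℝ (Fin n) → Set (EuclideanSpace ℝ (Fin m))) (xb : EuclideanSpace ℝ (Fin n)) (yb : EuclideanSpace ℝ (Fin m))
    (κ : ℝ) (hκ : 0 ≤ κ) (hAubin : AubinWRT C F xb yb κ) :
    ∀ ystar : EuclideanSpace ℝ (Fin m), ∀ xstar ∈ coderivWRT C F xb yb ystar, ‖xstar‖ ≤ κ * ‖ystar‖ := by
  intro ystar xstar hx
  have hnormals : limNC (cylL2 C) (gphL2 F ∩ cylL2 C) (toL2 xb yb) ⊆
      {w | ‖w.fst‖ ≤ κ * ‖w.snd‖} := by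
    refine limNC_subset (isClosed_le (continuous_norm.comp (WithLp.continuous_fst ..))
      (continuous_const.mul (continuous_norm.comp (WithLp.continuous_snd ..)))) ?_
    filter_upwards [hAubin.eventually_lipschitz_at_graph] with z hz hzΩ v hv
    exact norm_fst_le_of_mem_proxNC hCcv hκ (hz hzΩ.1) hv
  have h : ‖(toL2 xstar (-ystar)).fst‖ ≤ κ * ‖(toL2 xstar (-ystar)).snd‖ := hnormals hx
  rwa [toL2_fst, toL2_snd, norm_neg] at h

/-- Theorem 1, necessity: the Aubin property with respect to `C` with constant `κ`
forces `‖x*‖ ≤ κ‖y*‖` on the coderivative with respect to `C`. -/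
theorem stmt8 {n m : ℕ} (C : Set (EuclideanSpace ℝ (Fin n)))
    (hCne : C.Nonempty) (hCcl : IsClosed C) (hCcv : Convex ℝ C)
    (F : EuclideanSpace ℝ (Fin n) → Set (EuclideanSpace ℝ (Fin m))) (xb : EuclideanSpace ℝ (Fin n)) (yb : EuclideanSpace ℝ (Fin m))
    (hgph : yb ∈ F xb) (hxbC : xb ∈ C)
    (hloc : ∃ r > (0 : ℝ), IsClosed (gphL2 F ∩ Metric.closedBall (toL2 xb yb) r))
    (κ : ℝ) (hκ : 0 ≤ κ) (hAubin : AubinWRT C F xb yb κ) :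
    ∀ ystar : EuclideanSpace ℝ (Fin m), ∀ xstar ∈ coderivWRT C F xb yb ystar, ‖xstar‖ ≤ κ * ‖ystar‖ :=
  stmt8_general C hCcv F xb yb κ hκ hAubin
end

section
/- Let F : ℝ^n ⇒ ℝ^m be a set-valued mapping with (x̄,ȳ) ∈ gph F. Assume dom F := {x : F(x) ≠ ∅} is a nonempty closed convex set and gph F is locally closed around (x̄,ȳ). Then F has the relative Aubin property around (x̄,ȳ) (the Aubin property with respect to dom F) if and only if D̄*F(x̄,ȳ)(0) = {0}, where D̄*F := D*_{dom F} F is the limiting coderivative with respect to dom F. -/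
/-
Both sides are equivalent to a uniform bound on proximal normals: near `(x̄,ȳ)`, every proximal
normal `(x*,y*)` to `gph F` with respect to `dom F × ℝ^m` satisfies `‖x*‖ ≤ κ ‖y*‖`.

If such a `κ` failed to exist, normalized counterexamples would accumulate, by compactness of the
unit sphere, at a limiting normal `(x*,0)` with `‖x*‖ = 1`; conversely such a bound passes to
limiting normals, so it is equivalent to `D̄*F(x̄,ȳ)(0) = {0}`.

The Aubin property yields the bound: for a proximal normal `(x*,y*)` at `(a,b)`, the proximal
normal inequality tested at graph points over `a + s t x*` (inside `dom F` by convexity) gives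
`‖x*‖² - κ ‖x*‖ ‖y*‖ ≤ O(s)` for all small `s > 0`.

Conversely, the bound gives `‖x*‖ ≤ c ‖(x*,y*)‖` with `c = κ / √(1 + κ²) < 1`. Projecting `(x, b)`
onto the graph from a graph point `(a, b)` brings the base point closer to `x` by the factor `c`
and moves `b` by at most `‖x - a‖`. Hence a minimizer of `‖x - a‖` over a compact sublevel set
of `‖b - y‖ + ‖x - a‖ / (1 - c)` lies over `x`: the Aubin property with constant `1 / (1 - c)`.
-/

open Set Metric Filter Topology
open scoped RealInnerProductSpace

variable {E : Type*} [NormedAddCommGroup E] [InnerProductSpace ℝ E]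
variable {F' : Type*} [NormedAddCommGroup F'] [InnerProductSpace ℝ F']

section Pairs

variable {X Y : Type*}

lemma gphL2_subset_cylL2_dom (F : X → Set Y) : gphL2 F ⊆ cylL2 {x | (F x).Nonempty} :=
  fun _ hp => ⟨_, hp⟩

end Pairs

lemma div_sqrt_one_add_sq_lt_one (κ : ℝ) : κ / √(1 + κ ^ 2) < 1 := by
  rw [div_lt_one (Real.sqrt_pos.2 (by positivity))]
  calc κ ≤ |κ| := le_abs_self κ
    _ = √(κ ^ 2) := (Real.sqrt_sq_eq_abs κ).symm
    _ < √(1 + κ ^ 2) := Real.sqrt_lt_sqrt (sq_nonneg κ) (by linarith)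

lemma IsCompact.exists_eq_zero_of_forall_exists_le_mul {α : Type*} [TopologicalSpace α]
    {T : Set α} (hT : IsCompact T) (hne : T.Nonempty) {f : α → ℝ} (hf : ContinuousOn f T)
    (hf0 : ∀ p ∈ T, 0 ≤ f p) {c : ℝ} (hc : c < 1)
    (hstep : ∀ p ∈ T, 0 < f p → ∃ q ∈ T, f q ≤ c * f p) :
    ∃ p ∈ T, f p = 0 := by
  obtain ⟨p, hpT, hpmin⟩ := hT.exists_isMinOn hne hf
  refine ⟨p, hpT, (hf0 p hpT).eq_or_lt.elim Eq.symm fun hpos => ?_⟩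
  obtain ⟨q, hqT, hq⟩ := hstep p hpT hpos
  have hmin : f p ≤ f q := hpmin hqT
  nlinarith

section ProximalNormal

variable {Z : Type*} [NormedAddCommGroup Z] [InnerProductSpace ℝ Z]

lemma mem_of_mem_proxNC {C Ω : Set Z} {z v : Z} (hv : v ∈ proxNC C Ω z) : z ∈ Ω ∩ C := by
  obtain ⟨_, _, hproj, _⟩ := hv
  exact hproj.1

lemma zero_mem_proxNC {C Ω : Set Z} {z : Z} (hz : z ∈ Ω ∩ C) : (0 : Z) ∈ proxNC C Ω z :=
  ⟨1, one_pos, by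
    rw [smul_zero, add_zero]
    exact ⟨⟨hz, by rw [sub_self, norm_zero, infDist_zero_of_mem hz]⟩, hz.2⟩⟩

lemma smul_mem_proxNC {C Ω : Set Z} {z v : Z} (hv : v ∈ proxNC C Ω z) {c : ℝ} (hc : 0 < c) :
    c • v ∈ proxNC C Ω z := by
  obtain ⟨t, ht, h⟩ := hv
  exact ⟨t / c, by positivity, by rwa [smul_smul, div_mul_cancel₀ _ hc.ne']⟩

lemma sub_mem_proxNC_of_mem_projSet {C Ω : Set Z} (hΩC : Ω ⊆ C) {z w : Z}
    (hw : w ∈ projSet z Ω) (hz : z ∈ C) : z - w ∈ proxNC C Ω w := by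
  refine ⟨1, one_pos, ?_⟩
  rw [one_smul, add_sub_cancel, inter_eq_left.2 hΩC]
  exact ⟨hw, hz⟩

lemma inner_le_of_mem_proxNC {C Ω : Set Z} (hΩC : Ω ⊆ C) {z v : Z} (hv : v ∈ proxNC C Ω z) :
    ∃ t > (0 : ℝ), z + t • v ∈ C ∧ ∀ g ∈ Ω, ⟪v, g - z⟫ ≤ ‖g - z‖ ^ 2 / (2 * t) := by
  obtain ⟨t, ht, ⟨-, hnorm⟩, hC⟩ := hv
  rw [inter_eq_left.2 hΩC] at hnorm
  refine ⟨t, ht, hC, fun g hg => ?_⟩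
  have hclosest : ‖t • v‖ ≤ ‖(g - z) - t • v‖ := by
    calc ‖t • v‖ = ‖z - (z + t • v)‖ := by rw [sub_add_cancel_left, norm_neg]
      _ = infDist (z + t • v) Ω := hnorm
      _ ≤ dist (z + t • v) g := infDist_le_dist_of_mem hg
      _ = ‖(g - z) - t • v‖ := by rw [dist_comm, dist_eq_norm, sub_sub]
  have hsq := pow_le_pow_left₀ (norm_nonneg _) hclosest 2
  rw [norm_sub_sq_real, real_inner_smul_right] at hsq
  rw [le_div_iff₀ (by positivity)]
  nlinarith [real_inner_comm v (g - z)]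

end ProximalNormal

section NearestPoint

variable {Z : Type*} [NormedAddCommGroup Z] [ProperSpace Z]

lemma exists_mem_projSet_of_isClosed_inter_closedBall {S : Set Z} {zb z : Z} {r : ℝ}
    (hzb : zb ∈ S) (hcl : IsClosed (S ∩ closedBall zb r)) (hz : dist z zb ≤ r / 2) :
    ∃ w, w ∈ projSet z S := by
  have hzbK : zb ∈ S ∩ closedBall zb r :=
    ⟨hzb, mem_closedBall_self (by linarith [dist_nonneg (x := z) (y := zb)])⟩
  obtain ⟨w, hwK, hw⟩ := ((isCompact_closedBall zb r).of_isClosed_subset hcl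
    inter_subset_right).exists_infDist_eq_dist ⟨zb, hzbK⟩ z
  have hwzb : dist z w ≤ dist z zb := hw ▸ infDist_le_dist_of_mem hzbK
  refine ⟨w, hwK.1, le_antisymm ?_ (infDist_le_dist_of_mem hwK.1 |>.trans_eq ?_)⟩
  · rw [← dist_eq_norm', (le_infDist ⟨zb, hzb⟩)]
    intro g hg
    by_contra! hgw
    have hgK : g ∈ S ∩ closedBall zb r := ⟨hg, by
      rw [mem_closedBall]
      linarith [dist_triangle_left g zb z]⟩
    exact hgw.not_ge (hw ▸ infDist_le_dist_of_mem hgK)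
  · rw [dist_eq_norm']

end NearestPoint

section Product

variable {X Y : Type*} [NormedAddCommGroup X] [NormedAddCommGroup Y]

lemma dist_le_dist_fst_add_dist_snd (p q : WithLp 2 (X × Y)) :
    dist p q ≤ dist p.fst q.fst + dist p.snd q.snd := by
  rw [WithLp.prod_dist_eq_of_L2, Real.sqrt_le_left (by positivity)]
  nlinarith [dist_nonneg (x := p.fst) (y := q.fst), dist_nonneg (x := p.snd) (y := q.snd)]

lemma dist_toL2_snd (x : X) (p : WithLp 2 (X × Y)) : dist (toL2 x p.snd) p = ‖x - p.fst‖ := by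
  rw [WithLp.prod_dist_eq_of_L2]
  simp [dist_eq_norm]

lemma norm_fst_le_of_le_mul_norm_snd {κ : ℝ} (hκ : 0 ≤ κ) {v : WithLp 2 (X × Y)}
    (hv : ‖v.fst‖ ≤ κ * ‖v.snd‖) : ‖v.fst‖ ≤ κ / √(1 + κ ^ 2) * ‖v‖ := by
  have hs : 0 < √(1 + κ ^ 2) := Real.sqrt_pos.2 (by positivity)
  rw [div_mul_eq_mul_div, le_div_iff₀ hs, ← Real.sqrt_sq (norm_nonneg v.fst),
    ← Real.sqrt_mul (sq_nonneg _), ← Real.sqrt_sq (mul_nonneg hκ (norm_nonneg v)),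
    Real.sqrt_le_sqrt_iff (by positivity), mul_pow, WithLp.prod_norm_sq_eq_of_L2]
  nlinarith [mul_le_mul hv hv (norm_nonneg _) (by positivity), norm_nonneg v.snd]

lemma AubinWRT.eventually_local_bound {F : X → Set Y} {C : Set X} {xb : X} {yb : Y} {κ : ℝ}
    (haub : AubinWRT C F xb yb κ) :
    ∀ᶠ z in 𝓝 (toL2 xb yb), z ∈ gphL2 F → z.fst ∈ C →
      ∀ᶠ x in 𝓝 z.fst, x ∈ C → ∃ y ∈ F x, ‖z.snd - y‖ ≤ κ * ‖z.fst - x‖ := by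
  obtain ⟨U, hU, V, hV, haub⟩ := haub
  have hfst : Tendsto WithLp.fst (𝓝 (toL2 xb yb)) (𝓝 xb) :=
    (WithLp.continuous_fst 2 X Y).tendsto _
  have hsnd : Tendsto WithLp.snd (𝓝 (toL2 xb yb)) (𝓝 yb) :=
    (WithLp.continuous_snd 2 X Y).tendsto _
  filter_upwards [hfst.eventually (Filter.Eventually.eventually_nhds hU), hfst.eventually hU,
    hsnd.eventually hV] with z hUz hzU hzV hz hzC
  filter_upwards [hUz] with x hxU hxC
  exact haub x ⟨hxC, hxU⟩ z.fst ⟨hzC, hzU⟩ z.snd ⟨hz, hzV⟩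

variable [InnerProductSpace ℝ X] [InnerProductSpace ℝ Y]

def ProxNormalConeBound (C Ω : Set (WithLp 2 (X × Y))) (zb : WithLp 2 (X × Y)) (κ : ℝ) : Prop :=
  ∀ᶠ z in 𝓝 zb, ∀ v ∈ proxNC C Ω z, ‖v.fst‖ ≤ κ * ‖v.snd‖

lemma norm_fst_le_of_mem_proxNC_gphL2 {F : X → Set Y} {C : Set X} {κ : ℝ} (hκ : 0 ≤ κ)
    (hsub : gphL2 F ⊆ cylL2 C) (hconv : Convex ℝ C) {z v : WithLp 2 (X × Y)}
    (hv : v ∈ proxNC (cylL2 C) (gphL2 F) z)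
    (hlip : ∀ᶠ x in 𝓝 z.fst, x ∈ C → ∃ y ∈ F x, ‖z.snd - y‖ ≤ κ * ‖z.fst - x‖) :
    ‖v.fst‖ ≤ κ * ‖v.snd‖ := by
  obtain ⟨t, ht, hzt, hineq⟩ := inner_le_of_mem_proxNC hsub hv
  have hzC : z.fst ∈ C := hsub (mem_of_mem_proxNC hv).1
  set p := v.fst
  set q := v.snd
  -- test the proximal inequality along the segment `s ↦ z.fst + s • t • p`, `s ↓ 0`
  have hseg : Tendsto (fun s : ℝ => z.fst + s • t • p) (𝓝[>] 0) (𝓝 z.fst) := by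
    have : Continuous fun s : ℝ => z.fst + s • t • p := by fun_prop
    simpa using (this.tendsto 0).mono_left nhdsWithin_le_nhds
  have hest : ∀ᶠ s in 𝓝[>] (0 : ℝ), ‖p‖ ^ 2 - κ * ‖q‖ * ‖p‖ ≤ s * (‖p‖ ^ 2 * (1 + κ ^ 2) / 2) := by
    filter_upwards [hseg.eventually hlip, Ioc_mem_nhdsGT one_pos] with s hlip_s ⟨hs0, hs1⟩
    obtain ⟨y, hyF, hy⟩ :=
      hlip_s (hconv.add_smul_mem hzC (show z.fst + t • p ∈ C from hzt) ⟨hs0.le, hs1⟩)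
    have hyz : ‖y - z.snd‖ ≤ κ * (s * t * ‖p‖) := by
      rw [norm_sub_rev]
      simpa [norm_smul, abs_of_pos hs0, abs_of_pos ht, mul_assoc] using hy
    have key := hineq (toL2 (z.fst + s • t • p) y) hyF
    have hfst : (toL2 (z.fst + s • t • p) y - z).fst = s • t • p := by simp
    have hsnd : (toL2 (z.fst + s • t • p) y - z).snd = y - z.snd := by simp
    rw [WithLp.prod_inner_apply, WithLp.prod_norm_sq_eq_of_L2, WithLp.ofLp_fst, WithLp.ofLp_snd,
      WithLp.ofLp_fst, WithLp.ofLp_snd, hfst, hsnd, real_inner_smul_right, real_inner_smul_right,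
      real_inner_self_eq_norm_sq, norm_smul, norm_smul, Real.norm_eq_abs, Real.norm_eq_abs,
      abs_of_pos hs0, abs_of_pos ht, le_div_iff₀ (by positivity)] at key
    have hst : 0 < s * t := mul_pos hs0 ht
    refine le_of_mul_le_mul_left ?_ hst
    nlinarith [abs_real_inner_le_norm q (y - z.snd), neg_abs_le ⟪q, y - z.snd⟫,
      mul_le_mul_of_nonneg_left hyz (norm_nonneg q), pow_le_pow_left₀ (norm_nonneg _) hyz 2]
  have hlim : Tendsto (fun s : ℝ => s * (‖p‖ ^ 2 * (1 + κ ^ 2) / 2)) (𝓝[>] 0) (𝓝 0) :=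
    ((continuous_id.mul continuous_const).tendsto' 0 0 (zero_mul _)).mono_left
      nhdsWithin_le_nhds
  have hle : ‖p‖ * (‖p‖ - κ * ‖q‖) ≤ 0 := by nlinarith [ge_of_tendsto hlim hest]
  rcases (norm_nonneg p).eq_or_lt with hp | hp
  · rw [← hp]; positivity
  · nlinarith

lemma AubinWRT.proxNormalConeBound {F : X → Set Y} {C : Set X} {xb : X} {yb : Y} {κ : ℝ}
    (hκ : 0 ≤ κ) (hsub : gphL2 F ⊆ cylL2 C) (hconv : Convex ℝ C)
    (haub : AubinWRT C F xb yb κ) :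
    ProxNormalConeBound (cylL2 C) (gphL2 F) (toL2 xb yb) κ := by
  filter_upwards [haub.eventually_local_bound] with z hz v hv
  obtain ⟨hzF, hzC⟩ := mem_of_mem_proxNC hv
  exact norm_fst_le_of_mem_proxNC_gphL2 hκ hsub hconv hv (hz hzF hzC)

lemma ProxNormalConeBound.norm_fst_le_of_mem_limNC {C Ω : Set (WithLp 2 (X × Y))}
    {zb w : WithLp 2 (X × Y)} {κ : ℝ} (hbound : ProxNormalConeBound C Ω zb κ)
    (hw : w ∈ limNC C Ω zb) : ‖w.fst‖ ≤ κ * ‖w.snd‖ := by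
  obtain ⟨zs, vs, -, hzs, hvs, hvw⟩ := hw
  have hclosed : IsClosed {v : WithLp 2 (X × Y) | ‖v.fst‖ ≤ κ * ‖v.snd‖} :=
    isClosed_le (by fun_prop) (by fun_prop)
  exact hclosed.mem_of_tendsto hvw ((hzs.eventually hbound).mono fun k hk => hk _ (hvs k))

variable [FiniteDimensional ℝ X] [FiniteDimensional ℝ Y]

lemma exists_proxNormalConeBound {C Ω : Set (WithLp 2 (X × Y))} {zb : WithLp 2 (X × Y)}
    (h : ∀ w ∈ limNC C Ω zb, w.snd = 0 → w.fst = 0) :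
    ∃ κ ≥ 0, ProxNormalConeBound C Ω zb κ := by
  by_contra! hcon
  have hbad : ∀ k : ℕ, ∃ z, dist z zb < 1 / (k + 1) ∧
      ∃ v ∈ proxNC C Ω z, (k + 1) * ‖v.snd‖ < ‖v.fst‖ := by
    intro k
    have := hcon (k + 1) (by positivity)
    simp only [ProxNormalConeBound, not_eventually, not_forall, not_le, exists_prop] at this
    obtain ⟨z, hz, hzv⟩ := (nhds_basis_ball.frequently_iff.1 this) _ Nat.one_div_pos_of_nat
    exact ⟨z, hz, hzv⟩
  choose zs hzs vs hvs hlt using hbad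
  have hv0 : ∀ k, vs k ≠ 0 := fun k hk => by
    have := hlt k
    simp [hk] at this
  set ws : ℕ → WithLp 2 (X × Y) := fun k => ‖vs k‖⁻¹ • vs k
  have hws : ∀ k, ws k ∈ sphere (0 : WithLp 2 (X × Y)) 1 := fun k => by
    simp [ws, norm_smul, hv0 k]
  have hwsnd : ∀ k, ‖(ws k).snd‖ ≤ 1 / (k + 1) := fun k => by
    have hpos : 0 < ‖vs k‖⁻¹ := inv_pos.2 (norm_pos_iff.2 (hv0 k))
    have hlt' := mul_lt_mul_of_pos_left (hlt k) hpos
    have hfst := (WithLp.norm_fst_le X (ws k)).trans_eq (mem_sphere_zero_iff_norm.1 (hws k))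
    simp only [ws, WithLp.smul_fst, WithLp.smul_snd, norm_smul, norm_inv, norm_norm] at hfst ⊢
    rw [le_div_iff₀ (by positivity)]
    nlinarith
  obtain ⟨a, ha, φ, hφ, hwa⟩ := (isCompact_sphere (0 : WithLp 2 (X × Y)) 1).tendsto_subseq hws
  have hdecay : Tendsto (fun k => 1 / ((φ k : ℝ) + 1)) atTop (𝓝 0) :=
    tendsto_one_div_add_atTop_nhds_zero_nat.comp hφ.tendsto_atTop
  have hasnd : a.snd = 0 := by
    refine tendsto_nhds_unique (((WithLp.continuous_snd 2 X Y).tendsto a).comp hwa) ?_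
    exact squeeze_zero_norm (fun k => hwsnd (φ k)) hdecay
  have hlim : a ∈ limNC C Ω zb := by
    refine ⟨zs ∘ φ, ws ∘ φ, fun k => mem_of_mem_proxNC (hvs (φ k)), ?_,
      fun k => smul_mem_proxNC (hvs (φ k)) (inv_pos.2 (norm_pos_iff.2 (hv0 (φ k)))), hwa⟩
    exact tendsto_iff_dist_tendsto_zero.2
      (squeeze_zero (fun _ => dist_nonneg) (fun k => (hzs (φ k)).le) hdecay)
  have hafst := h a hlim hasnd
  have : ‖a‖ = 0 := by
    rw [← sq_eq_zero_iff, WithLp.prod_norm_sq_eq_of_L2, hafst, hasnd]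
    simp
  simp [this] at ha

lemma exists_mem_norm_sub_fst_le_of_proxNC {G : Set (WithLp 2 (X × Y))} {C : Set X}
    {zb : WithLp 2 (X × Y)} {r ε c : ℝ} (hc : 0 ≤ c) (hzb : zb ∈ G)
    (hcl : IsClosed (G ∩ closedBall zb r)) (hsub : G ⊆ cylL2 C)
    (hcone : ∀ w, dist w zb < ε → ∀ v ∈ proxNC (cylL2 C) G w, ‖v.fst‖ ≤ c * ‖v‖)
    {x : X} (hx : x ∈ C) {p : WithLp 2 (X × Y)} (hp : p ∈ G)
    (hr : dist (toL2 x p.snd) zb ≤ r / 2) (hε : dist (toL2 x p.snd) zb + ‖x - p.fst‖ < ε) :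
    ∃ q ∈ G, ‖x - q.fst‖ ≤ c * ‖x - p.fst‖ ∧ ‖p.snd - q.snd‖ ≤ ‖x - p.fst‖ := by
  set z := toL2 x p.snd
  -- the witness is a nearest point `w` of `G` to `(x, p.snd)`
  obtain ⟨w, hw⟩ := exists_mem_projSet_of_isClosed_inter_closedBall hzb hcl hr
  have hzw : ‖z - w‖ ≤ ‖x - p.fst‖ := by
    rw [norm_sub_rev, hw.2, ← dist_toL2_snd]
    exact infDist_le_dist_of_mem hp
  have hwzb : dist w zb < ε := by
    linarith [dist_triangle w z zb, (dist_eq_norm' w z).trans_le hzw]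
  have hv := hcone w hwzb _ (sub_mem_proxNC_of_mem_projSet hsub hw (show z ∈ cylL2 C from hx))
  refine ⟨w, hw.1, ?_, ?_⟩
  · calc ‖x - w.fst‖ = ‖(z - w).fst‖ := rfl
      _ ≤ c * ‖z - w‖ := hv
      _ ≤ c * ‖x - p.fst‖ := mul_le_mul_of_nonneg_left hzw hc
  · calc ‖p.snd - w.snd‖ = ‖(z - w).snd‖ := rfl
      _ ≤ ‖z - w‖ := WithLp.norm_snd_le _ _
      _ ≤ ‖x - p.fst‖ := hzw

lemma exists_mem_norm_sub_le_of_proxNC {F : X → Set Y} {C : Set X} {xb : X} {yb : Y}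
    {r ε c M δ : ℝ} (hc : 0 ≤ c) (hc1 : c < 1) (hM : 0 < M) (hMc : 1 + M * c = M)
    (hgph : yb ∈ F xb) (hcl : IsClosed (gphL2 F ∩ closedBall (toL2 xb yb) r))
    (hsub : gphL2 F ⊆ cylL2 C)
    (hcone : ∀ w, dist w (toL2 xb yb) < ε → ∀ v ∈ proxNC (cylL2 C) (gphL2 F) w,
      ‖v.fst‖ ≤ c * ‖v‖)
    (hδr : (4 + 2 * M) * δ ≤ r / 2) (hδε : (4 + 2 * M) * δ < ε)
    {x u : X} {y : Y} (hxC : x ∈ C) (hx : dist x xb < δ) (hu : dist u xb < δ)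
    (hyF : y ∈ F u) (hy : dist y yb < δ) :
    ∃ y' ∈ F x, ‖y - y'‖ ≤ M * ‖u - x‖ := by
  set zb := toL2 xb yb
  have hxu : ‖x - u‖ < 2 * δ := by linarith [dist_triangle_right x u xb, dist_eq_norm x u]
  have hδ0 : 0 ≤ (4 + 2 * M) * δ := by
    have := dist_nonneg.trans_lt hx
    positivity
  have hnear : ∀ p : WithLp 2 (X × Y), ‖p.snd - y‖ + M * ‖x - p.fst‖ ≤ M * ‖x - u‖ →
      dist (toL2 x p.snd) zb + ‖x - p.fst‖ ≤ (4 + 2 * M) * δ ∧ dist p zb ≤ (4 + 2 * M) * δ := by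
    intro p hp
    have hMxu : M * ‖x - u‖ ≤ M * (2 * δ) := mul_le_mul_of_nonneg_left hxu.le hM.le
    have h1 : ‖x - p.fst‖ ≤ ‖x - u‖ :=
      le_of_mul_le_mul_left (by linarith [norm_nonneg (p.snd - y)]) hM
    have h2 : dist p.snd yb ≤ ‖p.snd - y‖ + δ := by
      linarith [dist_triangle p.snd y yb, dist_eq_norm p.snd y]
    have h3 : dist p.fst xb ≤ ‖x - p.fst‖ + δ := by
      linarith [dist_triangle_left p.fst xb x, dist_eq_norm x p.fst]
    have h4 : ‖p.snd - y‖ ≤ M * ‖x - u‖ := by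
      linarith [mul_nonneg hM.le (norm_nonneg (x - p.fst))]
    have hz := dist_le_dist_fst_add_dist_snd (toL2 x p.snd) zb
    have hp' := dist_le_dist_fst_add_dist_snd p zb
    simp only [zb, toL2_fst, toL2_snd] at hz hp'
    constructor <;> linarith
  -- `T` is a sublevel set of the potential `‖·.snd - y‖ + M ‖x - ·.fst‖`, which the projection
  -- steps do not increase because `1 + M c = M`
  set T := gphL2 F ∩ closedBall zb r ∩ {p | ‖p.snd - y‖ + M * ‖x - p.fst‖ ≤ M * ‖x - u‖}
  have hT : ∀ p ∈ gphL2 F, ‖p.snd - y‖ + M * ‖x - p.fst‖ ≤ M * ‖x - u‖ → p ∈ T :=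
    fun p hpG hp => ⟨⟨hpG, mem_closedBall.2 (by linarith [(hnear p hp).2, hδ0])⟩, hp⟩
  have hTcpt : IsCompact T :=
    (isCompact_closedBall zb r).of_isClosed_subset
      (hcl.inter (isClosed_le (by fun_prop) (by fun_prop))) fun p hp => hp.1.2
  obtain ⟨p, hpT, hpx⟩ := hTcpt.exists_eq_zero_of_forall_exists_le_mul
    ⟨_, hT (toL2 u y) hyF (by simp)⟩ (f := fun p => ‖x - p.fst‖) (by fun_prop)
    (fun _ _ => norm_nonneg _) hc1 <| by
      intro p hpT _
      have hpnear := (hnear p hpT.2).1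
      obtain ⟨q, hqG, hqx, hqy⟩ := exists_mem_norm_sub_fst_le_of_proxNC hc hgph hcl hsub
        hcone hxC hpT.1.1 (by linarith [norm_nonneg (x - p.fst)]) (by linarith)
      refine ⟨q, hT q hqG ?_, hqx⟩
      calc ‖q.snd - y‖ + M * ‖x - q.fst‖
          ≤ (‖p.snd - y‖ + ‖x - p.fst‖) + M * (c * ‖x - p.fst‖) := by
            gcongr
            linarith [norm_sub_le_norm_sub_add_norm_sub q.snd p.snd y, norm_sub_rev q.snd p.snd]
        _ = ‖p.snd - y‖ + M * ‖x - p.fst‖ := by linear_combination ‖x - p.fst‖ * hMc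
        _ ≤ M * ‖x - u‖ := hpT.2
  refine ⟨p.snd, sub_eq_zero.1 (norm_eq_zero.1 hpx) ▸ hpT.1.1, ?_⟩
  have hpy : ‖p.snd - y‖ + M * ‖x - p.fst‖ ≤ M * ‖x - u‖ := hpT.2
  rw [hpx, mul_zero, add_zero, norm_sub_rev] at hpy
  rwa [norm_sub_rev u x]

lemma ProxNormalConeBound.exists_aubinWRT {F : X → Set Y} {C : Set X} {xb : X} {yb : Y}
    {r κ : ℝ} (hbound : ProxNormalConeBound (cylL2 C) (gphL2 F) (toL2 xb yb) κ) (hκ : 0 ≤ κ)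
    (hgph : yb ∈ F xb) (hr : 0 < r) (hcl : IsClosed (gphL2 F ∩ closedBall (toL2 xb yb) r))
    (hsub : gphL2 F ⊆ cylL2 C) :
    ∃ κ', 0 ≤ κ' ∧ AubinWRT C F xb yb κ' := by
  set c := κ / √(1 + κ ^ 2)
  have hc1 : c < 1 := div_sqrt_one_add_sq_lt_one κ
  obtain ⟨ε, hε, hcone⟩ := Metric.eventually_nhds_iff.1 hbound
  set M := (1 - c)⁻¹
  have hM : 0 < M := inv_pos.2 (by linarith)
  have hMc : 1 + M * c = M := by
    have : M * (1 - c) = 1 := inv_mul_cancel₀ (by linarith)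
    linarith
  set δ := min r ε / (8 + 4 * M)
  have hδ : 0 < δ := div_pos (lt_min hr hε) (by positivity)
  have hδ' : (4 + 2 * M) * δ = min r ε / 2 := by
    simp only [δ]
    field_simp
    ring
  refine ⟨M, hM.le, ball xb δ, ball_mem_nhds xb hδ, ball yb δ, ball_mem_nhds yb hδ, ?_⟩
  rintro x ⟨hxC, hx⟩ u ⟨-, hu⟩ y ⟨hyF, hy⟩
  exact exists_mem_norm_sub_le_of_proxNC (by positivity) hc1 hM hMc hgph hcl hsub
    (fun w hw v hv => norm_fst_le_of_le_mul_norm_snd hκ (hcone hw v hv))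
    (by rw [hδ']; linarith [min_le_left r ε]) (by rw [hδ']; linarith [min_le_right r ε])
    hxC hx hu hyF hy

lemma coderivWRT_zero_eq_singleton_iff {F : X → Set Y} {C : Set X} {xb : X} {yb : Y}
    (hsub : gphL2 F ⊆ cylL2 C) (hgph : yb ∈ F xb) :
    coderivWRT C F xb yb 0 = {0} ↔
      ∃ κ ≥ 0, ProxNormalConeBound (cylL2 C) (gphL2 F) (toL2 xb yb) κ := by
  have hcod : ∀ xs, xs ∈ coderivWRT C F xb yb 0 ↔
      toL2 xs 0 ∈ limNC (cylL2 C) (gphL2 F) (toL2 xb yb) := by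
    intro xs
    rw [coderivWRT, mem_ofPred_eq, neg_zero, inter_eq_left.2 hsub]
  constructor
  · refine fun h => exists_proxNormalConeBound fun w hw hw0 => ?_
    have hw' : w.fst ∈ coderivWRT C F xb yb 0 := (hcod _).2 (by rwa [← hw0])
    rwa [h, mem_singleton_iff] at hw'
  · rintro ⟨κ, -, hbound⟩
    refine eq_singleton_iff_unique_mem.2 ⟨(hcod 0).2 ?_, fun xs hxs => ?_⟩
    · have hzb : toL2 xb yb ∈ gphL2 F ∩ cylL2 C := ⟨hgph, hsub hgph⟩
      exact ⟨fun _ => toL2 xb yb, fun _ => 0, fun _ => hzb, tendsto_const_nhds,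
        fun _ => zero_mem_proxNC hzb, tendsto_const_nhds⟩
    · simpa using hbound.norm_fst_le_of_mem_limNC ((hcod xs).1 hxs)

end Product

theorem stmt12_general {n m : ℕ} (F : EuclideanSpace ℝ (Fin n) → Set (EuclideanSpace ℝ (Fin m)))
    (hdomcv : Convex ℝ {x : EuclideanSpace ℝ (Fin n) | (F x).Nonempty})
    (xb : EuclideanSpace ℝ (Fin n)) (yb : EuclideanSpace ℝ (Fin m)) (hgph : yb ∈ F xb)
    (hloc : ∃ r > (0 : ℝ), IsClosed (gphL2 F ∩ Metric.closedBall (toL2 xb yb) r)) :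
    (∃ κ : ℝ, 0 ≤ κ ∧ AubinWRT {x : EuclideanSpace ℝ (Fin n) | (F x).Nonempty} F xb yb κ) ↔
      coderivWRT {x : EuclideanSpace ℝ (Fin n) | (F x).Nonempty} F xb yb 0 = {(0 : EuclideanSpace ℝ (Fin n))} := by
  have hsub := gphL2_subset_cylL2_dom F
  rw [coderivWRT_zero_eq_singleton_iff hsub hgph]
  constructor
  · rintro ⟨κ, hκ, haub⟩
    exact ⟨κ, hκ, haub.proxNormalConeBound hκ hsub hdomcv⟩
  · rintro ⟨κ, hκ, hbound⟩
    obtain ⟨r, hr, hcl⟩ := hloc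
    exact hbound.exists_aubinWRT hκ hgph hr hcl hsub

/-- Corollary 1: the relative Aubin property holds around `(xb,yb)` iff
`D̄*F(xb,yb)(0) = {0}`. -/
theorem stmt12 {n m : ℕ} (F : EuclideanSpace ℝ (Fin n) → Set (EuclideanSpace ℝ (Fin m)))
    (hdomne : {x : EuclideanSpace ℝ (Fin n) | (F x).Nonempty}.Nonempty)
    (hdomcl : IsClosed {x : EuclideanSpace ℝ (Fin n) | (F x).Nonempty})
    (hdomcv : Convex ℝ {x : EuclideanSpace ℝ (Fin n) | (F x).Nonempty})
    (xb : EuclideanSpace ℝ (Fin n)) (yb : EuclideanSpace ℝ (Fin m)) (hgph : yb ∈ F xb)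
    (hloc : ∃ r > (0 : ℝ), IsClosed (gphL2 F ∩ Metric.closedBall (toL2 xb yb) r)) :
    (∃ κ : ℝ, 0 ≤ κ ∧ AubinWRT {x : EuclideanSpace ℝ (Fin n) | (F x).Nonempty} F xb yb κ) ↔
      coderivWRT {x : EuclideanSpace ℝ (Fin n) | (F x).Nonempty} F xb yb 0 = {(0 : EuclideanSpace ℝ (Fin n))} :=
  stmt12_general F hdomcv xb yb hgph hloc
end

section
/- Let f : ℝ^n → ℝ ∪ {∞}, let C ⊆ ℝ^n be a nonempty closed convex set, let x̄ ∈ C ∩ dom f, and suppose epi f is locally closed around (x̄, f(x̄)). If x̄ is a local solution of the problem min f(x) subject to x ∈ C, i.e. there exists r > 0 such that f(x̄) ≤ f(x) for all x ∈ C ∩ B̄(x̄,r), then 0 ∈ ∂^p_C f(x̄) and ∂^p_C f(x̄) ⊆ ∂_C f(x̄) (hence 0 ∈ ∂_C f(x̄)). -/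
/-!
At a local minimizer `x̄` of `f` over `C`, the point `(x̄, f(x̄) - r)` lies at distance at least `r`
from every `(x, α) ∈ epi f` with `x ∈ C`: either `‖x - x̄‖ > r`, or `α ≥ f(x) ≥ f(x̄)`. Hence
`(x̄, f(x̄))` is a nearest point of `epi f ∩ (C × ℝ)` to `(x̄, f(x̄)) + r • (0, -1)`, which says
`0 ∈ ∂^p_C f(x̄)`. A proximal normal at a point is a limiting normal there (constant sequences).
-/

open Set Metric Filter Topology
open scoped RealInnerProductSpace

variable {E : Type*} [NormedAddCommGroup E] [InnerProductSpace ℝ E]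
variable {F' : Type*} [NormedAddCommGroup F'] [InnerProductSpace ℝ F']

/-- The real value of `f : E → ℝ ∪ {∞}` (defaulting to `0` outside `dom f`). -/
noncomputable def rv (f : E → WithTop ℝ) (x : E) : ℝ := (f x).untopD 0

/-- The epigraph of `f`, inside the `L²` product `E ×₂ ℝ`. -/
def epiL2 (f : E → WithTop ℝ) : Set (WithLp 2 (E × ℝ)) :=
  {p | f ((WithLp.equiv 2 (E × ℝ)) p).1 ≤ ((((WithLp.equiv 2 (E × ℝ)) p).2 : ℝ) : WithTop ℝ)}

/-- The epigraphical mapping `𝓔^f(x) = {α | α ≥ f(x)}`. -/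
def epiMap (f : E → WithTop ℝ) : E → Set ℝ := fun x => {a : ℝ | f x ≤ (a : WithTop ℝ)}

/-- The limiting subdifferential of `f` at `xb` with respect to `C`:
`∂_C f(xb) = {x* | (x*,-1) ∈ N_{C×ℝ}((xb,f(xb)), epi f)}`. -/
noncomputable def limSubdiffWRT (C : Set E) (f : E → WithTop ℝ) (xb : E) : Set E :=
  {v | toL2 v (-1 : ℝ) ∈ limNC (cylL2 C) (epiL2 f) (toL2 xb (rv f xb))}

/-- The singular (horizon) subdifferential of `f` at `xb` with respect to `C`:
`∂^∞_C f(xb) = {x* | (x*,0) ∈ N_{C×ℝ}((xb,f(xb)), epi f)}`. -/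
noncomputable def singSubdiffWRT (C : Set E) (f : E → WithTop ℝ) (xb : E) : Set E :=
  {v | toL2 v (0 : ℝ) ∈ limNC (cylL2 C) (epiL2 f) (toL2 xb (rv f xb))}

/-- The proximal subdifferential of `f` at `xb` with respect to `C`:
`∂^p_C f(xb) = {x* | (x*,-1) ∈ N^p_{C×ℝ}((xb,f(xb)), epi f)}`. -/
noncomputable def proxSubdiffWRT (C : Set E) (f : E → WithTop ℝ) (xb : E) : Set E :=
  {v | toL2 v (-1 : ℝ) ∈ proxNC (cylL2 C) (epiL2 f) (toL2 xb (rv f xb))}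

theorem mem_projInv_of_forall_dist_le {G : Type*} [NormedAddCommGroup G] {S : Set G} {x p : G}
    (hx : x ∈ S) (h : ∀ q ∈ S, dist p x ≤ dist p q) : p ∈ projInv x S := by
  refine ⟨hx, ?_⟩
  rw [← dist_eq_norm, dist_comm]
  exact le_antisymm ((le_infDist ⟨x, hx⟩).2 h) (infDist_le_dist_of_mem hx)

theorem mem_proxNC_of_forall_dist_le {C Ω : Set E} {x v : E} {t : ℝ} (ht : 0 < t)
    (hx : x ∈ Ω ∩ C) (hC : x + t • v ∈ C)
    (h : ∀ q ∈ Ω ∩ C, dist (x + t • v) x ≤ dist (x + t • v) q) : v ∈ proxNC C Ω x :=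
  ⟨t, ht, mem_projInv_of_forall_dist_le hx h, hC⟩

theorem proxNC_subset_limNC {C Ω : Set E} {x : E} (hx : x ∈ Ω ∩ C) :
    proxNC C Ω x ⊆ limNC C Ω x := fun v hv =>
  ⟨fun _ => x, fun _ => v, fun _ => hx, tendsto_const_nhds, fun _ => hv, tendsto_const_nhds⟩

theorem toL2_add_smul_toL2 (x x' : E) (y y' t : ℝ) :
    toL2 x y + t • toL2 x' y' = toL2 (x + t • x') (y + t * y') :=
  rfl

theorem coe_rv_of_ne_top {α : Type*} {f : α → WithTop ℝ} {x : α} (h : f x ≠ ⊤) :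
    ((rv f x : ℝ) : WithTop ℝ) = f x := by
  obtain ⟨a, ha⟩ := WithTop.ne_top_iff_exists.1 h
  simp [rv, ← ha]

theorem toL2_mem_epiL2_inter_cylL2 {α : Type*} {f : α → WithTop ℝ} {C : Set α} {xb : α}
    (hxbC : xb ∈ C) (hxbdom : f xb ≠ ⊤) :
    toL2 xb (rv f xb) ∈ epiL2 f ∩ cylL2 C :=
  ⟨(coe_rv_of_ne_top hxbdom).ge, hxbC⟩

theorem le_dist_toL2_sub_of_forall_le {G : Type*} [NormedAddCommGroup G] {f : G → WithTop ℝ}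
    {C : Set G} {xb : G} {r : ℝ} (hr : 0 < r) (hxbdom : f xb ≠ ⊤)
    (hmin : ∀ x ∈ C ∩ closedBall xb r, f xb ≤ f x) {q : WithLp 2 (G × ℝ)}
    (hq : q ∈ epiL2 f ∩ cylL2 C) : r ≤ dist (toL2 xb (rv f xb - r)) q := by
  rw [WithLp.prod_dist_eq_of_L2, Real.le_sqrt' hr]
  change r ^ 2 ≤ dist xb q.fst ^ 2 + dist (rv f xb - r) q.snd ^ 2
  by_cases hball : q.fst ∈ closedBall xb r
  · have hval : rv f xb ≤ q.snd := by
      have := (hmin q.fst ⟨hq.2, hball⟩).trans hq.1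
      rwa [← coe_rv_of_ne_top hxbdom, WithTop.coe_le_coe] at this
    have : r ≤ dist (rv f xb - r) q.snd := by
      rw [Real.dist_eq, abs_sub_comm, abs_of_nonneg (by linarith)]
      linarith
    nlinarith [sq_nonneg (dist xb q.fst)]
  · have : r < dist xb q.fst := by
      rw [mem_closedBall, dist_comm, not_le] at hball
      exact hball
    nlinarith [sq_nonneg (dist (rv f xb - r) q.snd)]

theorem zero_mem_proxSubdiffWRT_of_forall_le {f : E → WithTop ℝ} {C : Set E} {xb : E} {r : ℝ}
    (hr : 0 < r) (hxbC : xb ∈ C) (hxbdom : f xb ≠ ⊤)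
    (hmin : ∀ x ∈ C ∩ closedBall xb r, f xb ≤ f x) : (0 : E) ∈ proxSubdiffWRT C f xb := by
  have hshift : toL2 xb (rv f xb) + r • toL2 (0 : E) (-1 : ℝ) = toL2 xb (rv f xb - r) := by
    rw [toL2_add_smul_toL2, smul_zero, add_zero, mul_neg_one, ← sub_eq_add_neg]
  refine mem_proxNC_of_forall_dist_le hr (toL2_mem_epiL2_inter_cylL2 hxbC hxbdom) ?_ ?_
  · rwa [hshift]
  · intro q hq
    rw [hshift]
    calc dist (toL2 xb (rv f xb - r)) (toL2 xb (rv f xb)) = r := by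
          rw [WithLp.prod_dist_eq_of_L2]
          change √(dist xb xb ^ 2 + dist (rv f xb - r) (rv f xb) ^ 2) = r
          rw [dist_self, Real.dist_eq, sub_sub_cancel_left, abs_neg]
          simp [hr.le, abs_of_pos hr]
      _ ≤ _ := le_dist_toL2_sub_of_forall_le hr hxbdom hmin hq

theorem proxSubdiffWRT_subset_limSubdiffWRT {f : E → WithTop ℝ} {C : Set E} {xb : E}
    (hxbC : xb ∈ C) (hxbdom : f xb ≠ ⊤) :
    proxSubdiffWRT C f xb ⊆ limSubdiffWRT C f xb := fun _ hv =>
  proxNC_subset_limNC (toL2_mem_epiL2_inter_cylL2 hxbC hxbdom) hv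

theorem stmt19_general {n : ℕ}
    (f : EuclideanSpace ℝ (Fin n) → WithTop ℝ) (C : Set (EuclideanSpace ℝ (Fin n)))
    (xb : EuclideanSpace ℝ (Fin n)) (hxbC : xb ∈ C) (hxbdom : f xb ≠ ⊤)
    (r : ℝ) (hr : 0 < r)
    (hmin : ∀ x ∈ C ∩ Metric.closedBall xb r, f xb ≤ f x) :
    (0 : EuclideanSpace ℝ (Fin n)) ∈ proxSubdiffWRT C f xb ∧
    proxSubdiffWRT C f xb ⊆ limSubdiffWRT C f xb :=
  ⟨zero_mem_proxSubdiffWRT_of_forall_le hr hxbC hxbdom hmin,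
    proxSubdiffWRT_subset_limSubdiffWRT hxbC hxbdom⟩

/-- Theorem 4: necessary optimality condition — at a local solution of
`min f over C` one has `0 ∈ ∂^p_C f(xb) ⊆ ∂_C f(xb)`. -/
theorem stmt19 {n : ℕ}
    (f : EuclideanSpace ℝ (Fin n) → WithTop ℝ) (C : Set (EuclideanSpace ℝ (Fin n)))
    (hCne : C.Nonempty) (hCcl : IsClosed C) (hCcv : Convex ℝ C)
    (xb : EuclideanSpace ℝ (Fin n)) (hxbC : xb ∈ C) (hxbdom : f xb ≠ ⊤)
    (hloc : ∃ r > (0 : ℝ), IsClosed (epiL2 f ∩ Metric.closedBall (toL2 xb (rv f xb)) r))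
    (r : ℝ) (hr : 0 < r)
    (hmin : ∀ x ∈ C ∩ Metric.closedBall xb r, f xb ≤ f x) :
    (0 : EuclideanSpace ℝ (Fin n)) ∈ proxSubdiffWRT C f xb ∧
    proxSubdiffWRT C f xb ⊆ limSubdiffWRT C f xb :=
  stmt19_general f C xb hxbC hxbdom r hr hmin
end
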